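/- arXiv:1010.2956 — 5 statements merged into one kernel-verified Lean document; each statement's English description precedes it below -/
import Mathlib

section
/- (Discrete nabla Dubois–Reymond lemma) Let a, b ∈ ℤ with a < b, and let f : ℤ → ℝ. If ∑_{t=a+1}^{b} f(t) · (η(t) − η(t−1)) = 0 for every η : ℤ → ℝ with η(a) = η(b) = 0, then there is a constant c ∈ ℝ with f(t) = c for all t with a+1 ≤ t ≤ b. -/
/-!
Testing against the nabla derivative of the indicator of a single interior point `s` picks out
`f s - f (s + 1)`, so `f` takes the same value at consecutive points of `(a, b]`.
-/

theorem Finset.sum_mul_nabla_single (S : Finset ℤ) (f : ℤ → ℝ) (s : ℤ) :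
    ∑ t ∈ S, f t * ((Pi.single s 1 : ℤ → ℝ) t - (Pi.single s 1 : ℤ → ℝ) (t - 1)) =
      (if s ∈ S then f s else 0) - (if s + 1 ∈ S then f (s + 1) else 0) := by
  simp only [mul_sub, Finset.sum_sub_distrib, Pi.single_apply, sub_eq_iff_eq_add, mul_ite,
    mul_one, mul_zero, Finset.sum_ite_eq']

theorem Int.apply_eq_of_apply_add_one_eq {α : Type*} (f : ℤ → α) {m n : ℤ}
    (hstep : ∀ s, m ≤ s → s < n → f (s + 1) = f s) {t : ℤ} (hmt : m ≤ t) (htn : t ≤ n) :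
    f t = f m := by
  induction t, hmt using Int.leInduction with
  | base => rfl
  | succ k hmk ih => exact (hstep k hmk (by omega)).trans (ih (by omega))

theorem discrete_nabla_duboisReymond_general (a b : ℤ) (f : ℤ → ℝ)
    (h : ∀ η : ℤ → ℝ, η a = 0 → η b = 0 →
      ∑ t ∈ Finset.Icc (a + 1) b, f t * (η t - η (t - 1)) = 0) :
    ∃ c : ℝ, ∀ t : ℤ, a + 1 ≤ t → t ≤ b → f t = c := by
  refine ⟨f (a + 1), fun t hat htb ↦ Int.apply_eq_of_apply_add_one_eq f ?_ hat htb⟩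
  intro s has hsb
  have h_s := h (Pi.single s 1) (Pi.single_eq_of_ne (by omega) 1)
    (Pi.single_eq_of_ne (by omega) 1)
  rw [Finset.sum_mul_nabla_single, if_pos (Finset.mem_Icc.mpr ⟨has, hsb.le⟩),
    if_pos (Finset.mem_Icc.mpr ⟨by omega, hsb⟩)] at h_s
  exact (sub_eq_zero.mp h_s).symm

/-- Discrete nabla Dubois–Reymond lemma on ℤ. -/
theorem discrete_nabla_duboisReymond (a b : ℤ) (hab : a < b) (f : ℤ → ℝ)
    (h : ∀ η : ℤ → ℝ, η a = 0 → η b = 0 →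
      ∑ t ∈ Finset.Icc (a + 1) b, f t * (η t - η (t - 1)) = 0) :
    ∃ c : ℝ, ∀ t : ℤ, a + 1 ≤ t → t ≤ b → f t = c :=
  discrete_nabla_duboisReymond_general a b f h
end

section
/- Let a, b ∈ ℤ with a < b and f, g : ℤ → ℝ. If for every η : ℤ → ℝ with η(a) = η(b) = 0 we have ∑_{t=a}^{b−1} f(t)·(η(t+1)−η(t)) + ∑_{t=a+1}^{b} g(t)·(η(t)−η(t−1)) = 0, then there exists a constant c ∈ ℝ with f(t−1) + g(t) = c for all a+1 ≤ t ≤ b. -/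
/-!
Shifting the index turns the delta sum into a nabla sum, so the hypothesis says that
`∑_{t=a+1}^{b} (f(t-1) + g t) ∇η(t) = 0` for every admissible `η`. Testing against the indicator
of `[a+1, t-1]`, whose nabla derivative is `δ_{a+1} - δ_t` on `[a+1, b]`, gives
`f a + g (a+1) = f (t-1) + g t`.
-/

open Finset

theorem sum_Ico_eq_sum_Icc_sub_one {M : Type*} [AddCommMonoid M] (a b : ℤ) (F : ℤ → M) :
    ∑ t ∈ Ico a b, F t = ∑ t ∈ Icc (a + 1) b, F (t - 1) :=
  sum_nbij' (· + 1) (· - 1) (by intro t; simp only [mem_Ico, mem_Icc]; omega)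
    (by intro t; simp only [mem_Ico, mem_Icc]; omega) (by simp) (by simp) (by simp)

theorem indicator_Ico_sub_indicator_Ico_sub_one {R : Type*} [Ring R] {a t s : ℤ}
    (hat : a + 1 ≤ t) (has : a + 1 ≤ s) :
    ((if s ∈ Ico (a + 1) t then 1 else 0) - if s - 1 ∈ Ico (a + 1) t then 1 else 0 : R)
      = (if s = a + 1 then 1 else 0) - if s = t then 1 else 0 := by
  simp only [mem_Ico]
  split_ifs <;> first | (exfalso; omega) | simp

theorem eq_of_forall_sum_mul_nabla_eq_zero {R : Type*} [Ring R] {a b : ℤ} {u : ℤ → R}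
    (h : ∀ η : ℤ → R, η a = 0 → η b = 0 →
      ∑ t ∈ Icc (a + 1) b, u t * (η t - η (t - 1)) = 0)
    {t : ℤ} (hat : a + 1 ≤ t) (htb : t ≤ b) : u t = u (a + 1) := by
  let η : ℤ → R := fun s => if s ∈ Ico (a + 1) t then 1 else 0
  have hηa : η a = 0 := if_neg (by simp)
  have hηb : η b = 0 := if_neg (by simp only [mem_Ico]; omega)
  have hsum : ∑ s ∈ Icc (a + 1) b, u s * (η s - η (s - 1)) = u (a + 1) - u t := by
    rw [sum_congr rfl fun s hs =>
      congrArg (u s * ·) (indicator_Ico_sub_indicator_Ico_sub_one hat (mem_Icc.1 hs).1)]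
    simp only [mul_sub, mul_ite, mul_one, mul_zero, sum_sub_distrib, sum_ite_eq']
    rw [if_pos (mem_Icc.2 ⟨le_rfl, hat.trans htb⟩), if_pos (mem_Icc.2 ⟨hat, htb⟩)]
  exact (sub_eq_zero.1 (hsum ▸ h η hηa hηb)).symm

theorem delta_nabla_duboisReymond_general (a b : ℤ) (f g : ℤ → ℝ)
    (h : ∀ η : ℤ → ℝ, η a = 0 → η b = 0 →
      (∑ t ∈ Finset.Ico a b, f t * (η (t + 1) - η t))
        + (∑ t ∈ Finset.Icc (a + 1) b, g t * (η t - η (t - 1))) = 0) :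
    ∃ c : ℝ, ∀ t : ℤ, a + 1 ≤ t → t ≤ b → f (t - 1) + g t = c := by
  have h_nabla : ∀ η : ℤ → ℝ, η a = 0 → η b = 0 →
      ∑ t ∈ Icc (a + 1) b, (f (t - 1) + g t) * (η t - η (t - 1)) = 0 := by
    intro η ha hb
    rw [← h η ha hb, sum_Ico_eq_sum_Icc_sub_one, ← sum_add_distrib]
    simp only [sub_add_cancel, add_mul]
  exact ⟨_, fun t hat htb => eq_of_forall_sum_mul_nabla_eq_zero h_nabla hat htb⟩

/-- Combined discrete delta-nabla Dubois–Reymond lemma on ℤ. -/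
theorem delta_nabla_duboisReymond (a b : ℤ) (hab : a < b) (f g : ℤ → ℝ)
    (h : ∀ η : ℤ → ℝ, η a = 0 → η b = 0 →
      (∑ t ∈ Finset.Ico a b, f t * (η (t + 1) - η t))
        + (∑ t ∈ Finset.Icc (a + 1) b, g t * (η t - η (t - 1))) = 0) :
    ∃ c : ℝ, ∀ t : ℤ, a + 1 ≤ t → t ≤ b → f (t - 1) + g t = c :=
  delta_nabla_duboisReymond_general a b f g h
end

section
/- (Classical Dubois–Reymond lemma) Let f : [a,b] → ℝ be continuous. If ∫_a^b f(t)·η'(t) dt = 0 for every continuously differentiable η : [a,b] → ℝ with η(a) = η(b) = 0, then f is constant on [a,b]. -/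
/-!
Subtract from `f` its mean value `c`. The primitive `η` of `f - c` vanishing at `a` also vanishes
at `b`, so it is an admissible test function, and `η' = f - c` gives `∫ f (f - c) = 0`. Since
`∫ c (f - c) = 0` as well, `∫ (f - c)² = 0`, which forces the continuous function `f - c` to vanish
on `[a, b]`. As `f` is only continuous on `[a, b]`, the argument runs on its extension to `ℝ`
that is constant outside `[a, b]`.
-/

open Set intervalIntegral

theorem Continuous.contDiff_one_integral {E : Type*} [NormedAddCommGroup E] [NormedSpace ℝ E]
    [CompleteSpace E] {φ : ℝ → E} (hφ : Continuous φ) (a : ℝ) :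
    ContDiff ℝ 1 (fun t => ∫ s in a..t, φ s) := by
  rw [contDiff_one_iff_deriv]
  refine ⟨fun t => (hφ.integral_hasStrictDerivAt a t).hasDerivAt.differentiableAt, ?_⟩
  simpa only [funext (hφ.deriv_integral φ a)] using hφ

theorem intervalIntegral.eqOn_zero_of_integral_eq_zero_of_nonneg {φ : ℝ → ℝ} {a b : ℝ}
    (hab : a < b) (hφ : ContinuousOn φ (Icc a b)) (hφ₀ : ∀ t ∈ Icc a b, 0 ≤ φ t)
    (hint : ∫ t in a..b, φ t = 0) : EqOn φ 0 (Icc a b) := by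
  intro t ht
  by_contra hne
  have hpos : 0 < ∫ t in a..b, φ t :=
    integral_pos hab hφ (fun s hs => hφ₀ s (Ioc_subset_Icc_self hs))
      ⟨t, ht, lt_of_le_of_ne (hφ₀ t ht) (Ne.symm hne)⟩
  exact hpos.ne' hint

theorem intervalIntegral.integral_sub_mean_eq_zero {g : ℝ → ℝ} {a b : ℝ} (hab : a ≠ b)
    (hg : IntervalIntegrable g MeasureTheory.volume a b) :
    ∫ t in a..b, (g t - (∫ s in a..b, g s) / (b - a)) = 0 := by
  rw [integral_sub hg intervalIntegrable_const, integral_const, smul_eq_mul,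
    mul_div_cancel₀ _ (sub_ne_zero.mpr hab.symm), sub_self]

theorem intervalIntegral.integral_sq_sub_eq_of_integral_sub_eq_zero {g : ℝ → ℝ} {a b c : ℝ}
    (hg : Continuous g) (hmean : ∫ t in a..b, (g t - c) = 0) :
    ∫ t in a..b, (g t - c) ^ 2 = ∫ t in a..b, g t * (g t - c) := by
  have hsplit : ∀ t, (g t - c) ^ 2 = g t * (g t - c) - c * (g t - c) := fun t => by ring
  have hgc : Continuous fun t => g t - c := hg.sub continuous_const
  simp only [hsplit]
  rw [integral_sub (f := fun t => g t * (g t - c)) (g := fun t => c * (g t - c))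
    ((hg.mul hgc).intervalIntegrable _ _) ((continuous_const.mul hgc).intervalIntegrable _ _),
    integral_const_mul, hmean, mul_zero,
    sub_zero]

/-- Classical Dubois–Reymond lemma. -/
theorem classical_duboisReymond (a b : ℝ) (hab : a < b) (f : ℝ → ℝ)
    (hf : ContinuousOn f (Set.Icc a b))
    (h : ∀ η : ℝ → ℝ, ContDiff ℝ 1 η → η a = 0 → η b = 0 →
      ∫ t in a..b, f t * deriv η t = 0) :
    ∃ c : ℝ, ∀ t ∈ Set.Icc a b, f t = c := by
  set g : ℝ → ℝ := IccExtend hab.le (domRestrict (Icc a b) f)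
  have hg : Continuous g := hf.domRestrict.Icc_extend'
  have hgf : EqOn g f (Icc a b) := fun t ht => IccExtend_of_mem hab.le _ ht
  set c := (∫ s in a..b, g s) / (b - a)
  have hmean : ∫ t in a..b, (g t - c) = 0 :=
    integral_sub_mean_eq_zero hab.ne (hg.intervalIntegrable a b)
  have hgc : Continuous fun t => g t - c := hg.sub continuous_const
  have horth : ∫ t in a..b, g t * (g t - c) = 0 := by
    have := h _ (hgc.contDiff_one_integral a) integral_same hmean
    rw [funext (hgc.deriv_integral _ a)] at this
    rw [← this]
    refine integral_congr fun t ht => ?_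
    rw [uIcc_of_le hab.le] at ht
    simp only [hgf ht]
  have hsq : EqOn (fun t => (g t - c) ^ 2) 0 (Icc a b) :=
    eqOn_zero_of_integral_eq_zero_of_nonneg hab (hgc.pow 2).continuousOn
      (fun t _ => sq_nonneg _) (by rw [integral_sq_sub_eq_of_integral_sub_eq_zero hg hmean, horth])
  refine ⟨c, fun t ht => ?_⟩
  rw [← hgf ht, ← sub_eq_zero, ← pow_eq_zero_iff two_ne_zero]
  exact hsq ht
end

section
/- (Discrete isoperimetric Lagrange multiplier rule, normal case) Let a, b ∈ ℤ with a+1 < b, and let m, f : {a,…,b} → ℝ. Suppose that for every η : ℤ → ℝ with η(a) = η(b) = 0 satisfying ∑_{t=a+1}^b f(t)·(η(t)−η(t−1)) = 0, we also have ∑_{t=a+1}^b m(t)·(η(t)−η(t−1)) = 0, and suppose f is not constant on {a+1,…,b}. Then there exist constants λ, c ∈ ℝ such that m(t) − λ·f(t) = c for all a+1 ≤ t ≤ b. -/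
/-!
A variation `η` vanishing at `a` and `b` is the same thing as the partial sum of a `ξ` with
`∑_{t=a+1}^b ξ t = 0`, via `ξ = η^∇`. So the hypothesis says that the linear form
`ξ ↦ ∑ m ξ` vanishes on the common kernel of `ξ ↦ ∑ ξ` and `ξ ↦ ∑ f ξ`. It is therefore a
linear combination `c • ∑ ξ + λ • ∑ f ξ` of them, and evaluating at point masses gives
`m t = c + λ f t`.
-/

open Finset

section WeightedSum

variable {ι 𝕜 : Type*} [Field 𝕜]

def weightedSum (s : Finset ι) (g : ι → 𝕜) : (ι → 𝕜) →ₗ[𝕜] 𝕜 :=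
  ∑ t ∈ s, g t • LinearMap.proj t

@[simp]
theorem weightedSum_apply (s : Finset ι) (g ξ : ι → 𝕜) :
    weightedSum s g ξ = ∑ t ∈ s, g t * ξ t := by
  simp [weightedSum]

theorem exists_sub_mul_eq_const_of_weightedSum (s : Finset ι) (f m : ι → 𝕜)
    (h : ∀ ξ : ι → 𝕜, ∑ t ∈ s, ξ t = 0 → ∑ t ∈ s, f t * ξ t = 0 →
      ∑ t ∈ s, m t * ξ t = 0) :
    ∃ lam c : 𝕜, ∀ t ∈ s, m t - lam * f t = c := by
  classical
  have hker : ⨅ i, LinearMap.ker (![weightedSum s 1, weightedSum s f] i) ≤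
      LinearMap.ker (weightedSum s m) := by
    intro ξ hξ
    simp only [Submodule.mem_iInf, Fin.forall_fin_two, LinearMap.mem_ker] at hξ
    simpa using h ξ (by simpa using hξ.1) (by simpa using hξ.2)
  obtain ⟨c, hc⟩ :=
    (Submodule.mem_span_range_iff_exists_fun 𝕜).1 (mem_span_of_iInf_ker_le_ker hker)
  refine ⟨c 1, c 0, fun t ht => ?_⟩
  have hpoint := LinearMap.congr_fun hc (Pi.single t 1)
  simp [Fin.sum_univ_two, Pi.single_apply, ht] at hpoint
  linear_combination -hpoint

end WeightedSum

theorem sum_Icc_sub_sum_Icc_sub_one {M : Type*} [AddCommGroup M] (ξ : ℤ → M) {a t : ℤ}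
    (h : a ≤ t) : ∑ s ∈ Icc a t, ξ s - ∑ s ∈ Icc a (t - 1), ξ s = ξ t := by
  rw [← insert_Icc_sub_one_right_eq_Icc h, sum_insert (by simp)]
  abel

theorem discrete_isoperimetric_normal_general (a b : ℤ) (m f : ℤ → ℝ)
    (h : ∀ η : ℤ → ℝ, η a = 0 → η b = 0 →
      (∑ t ∈ Finset.Icc (a + 1) b, f t * (η t - η (t - 1))) = 0 →
      (∑ t ∈ Finset.Icc (a + 1) b, m t * (η t - η (t - 1))) = 0) :
    ∃ lam c : ℝ, ∀ t ∈ Finset.Icc (a + 1) b, m t - lam * f t = c := by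
  refine exists_sub_mul_eq_const_of_weightedSum _ f m fun ξ hξ hfξ => ?_
  let η : ℤ → ℝ := fun t => ∑ s ∈ Icc (a + 1) t, ξ s
  have hη : ∀ g : ℤ → ℝ, ∑ t ∈ Icc (a + 1) b, g t * (η t - η (t - 1)) =
      ∑ t ∈ Icc (a + 1) b, g t * ξ t := fun g =>
    sum_congr rfl fun t ht => by rw [sum_Icc_sub_sum_Icc_sub_one ξ (mem_Icc.1 ht).1]
  rw [← hη]
  exact h η (by simp [η]) hξ (by rwa [hη])

/-- Discrete isoperimetric Lagrange multiplier rule, normal case. -/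
theorem discrete_isoperimetric_normal (a b : ℤ) (hab : a + 1 < b) (m f : ℤ → ℝ)
    (h : ∀ η : ℤ → ℝ, η a = 0 → η b = 0 →
      (∑ t ∈ Finset.Icc (a + 1) b, f t * (η t - η (t - 1))) = 0 →
      (∑ t ∈ Finset.Icc (a + 1) b, m t * (η t - η (t - 1))) = 0)
    (hnc : ¬∃ c : ℝ, ∀ t ∈ Finset.Icc (a + 1) b, f t = c) :
    ∃ lam c : ℝ, ∀ t ∈ Finset.Icc (a + 1) b, m t - lam * f t = c :=
  discrete_isoperimetric_normal_general a b m f h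
end

section
/- (Discrete isoperimetric multiplier rule, abnormal case included) Let a, b ∈ ℤ with a+1 < b and m, f : {a,…,b} → ℝ. Suppose that for every η : ℤ → ℝ with η(a) = η(b) = 0 and ∑_{t=a+1}^b f(t)·(η(t)−η(t−1)) = 0 we have ∑_{t=a+1}^b m(t)·(η(t)−η(t−1)) = 0. Then there exist λ₀, λ ∈ ℝ, not both zero, and c ∈ ℝ such that λ₀·m(t) − λ·f(t) = c for all a+1 ≤ t ≤ b. -/
/-!
Both sides of the hypothesis are linear forms in the variation `η`, restricted to the space of
variations vanishing at `a` and `b`. The hypothesis says that the kernel of the form built from `f`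
lies in the kernel of the form built from `m`, so the second is a multiple `λ` of the first. Testing
with the unit bump at an interior point `s` turns this into `m s - m (s + 1) = λ (f s - f (s + 1))`,
so `m - λ f` is constant on `{a + 1, …, b}`, and `λ₀ = 1` works.
-/

open Finset

section Variation

variable {R : Type*} [CommRing R]

/-- `firstVariation a b φ η` is the nabla integral `∫ₐᵇ φ(t) η^∇(t) ∇t`. -/
noncomputable def firstVariation (a b : ℤ) (φ : ℤ → R) : (ℤ → R) →ₗ[R] R where
  toFun η := ∑ t ∈ Icc (a + 1) b, φ t * (η t - η (t - 1))
  map_add' η ζ := by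
    simp only [← sum_add_distrib, Pi.add_apply]
    exact sum_congr rfl fun _ _ ↦ by ring
  map_smul' c η := by
    simp only [mul_sum, Pi.smul_apply, smul_eq_mul, RingHom.id_apply]
    exact sum_congr rfl fun _ _ ↦ by ring

theorem firstVariation_apply (a b : ℤ) (φ η : ℤ → R) :
    firstVariation a b φ η = ∑ t ∈ Icc (a + 1) b, φ t * (η t - η (t - 1)) :=
  rfl

theorem firstVariation_single {a b s : ℤ} (hs : s ∈ Ioo a b) (φ : ℤ → R) :
    firstVariation a b φ (Pi.single s 1) = φ s - φ (s + 1) := by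
  rw [mem_Ioo] at hs
  have hsub : ∀ t : ℤ, (t - 1 = s) = (t = s + 1) := fun t ↦ propext sub_eq_iff_eq_add
  simp only [firstVariation_apply, mul_sub, sum_sub_distrib, Pi.single_apply, hsub, mul_ite,
    mul_one, mul_zero, sum_ite_eq', mem_Icc]
  rw [if_pos (by omega), if_pos (by omega)]

def endpointVanishing (a b : ℤ) : Submodule R (ℤ → R) :=
  LinearMap.ker (LinearMap.proj a) ⊓ LinearMap.ker (LinearMap.proj b)

theorem mem_endpointVanishing {a b : ℤ} {η : ℤ → R} :
    η ∈ endpointVanishing a b ↔ η a = 0 ∧ η b = 0 := by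
  simp [endpointVanishing]

theorem single_mem_endpointVanishing {a b s : ℤ} (hs : s ∈ Ioo a b) :
    (Pi.single s 1 : ℤ → R) ∈ endpointVanishing a b := by
  rw [mem_Ioo] at hs
  rw [mem_endpointVanishing, Pi.single_apply, Pi.single_apply, if_neg (by omega),
    if_neg (by omega)]
  exact ⟨rfl, rfl⟩

end Variation

theorem exists_smul_eq_of_ker_le_ker {𝕜 E : Type*} [Field 𝕜] [AddCommGroup E] [Module 𝕜 E]
    {L K : E →ₗ[𝕜] 𝕜} (h : LinearMap.ker L ≤ LinearMap.ker K) : ∃ c : 𝕜, c • L = K := by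
  have hK : K ∈ Submodule.span 𝕜 (Set.range fun _ : Unit ↦ L) :=
    mem_span_of_iInf_ker_le_ker (by simpa using h)
  rwa [Set.range_const, Submodule.mem_span_singleton] at hK

theorem exists_sub_succ_eq_mul_of_firstVariation {𝕜 : Type*} [Field 𝕜] {a b : ℤ} {m f : ℤ → 𝕜}
    (h : ∀ η ∈ endpointVanishing a b, firstVariation a b f η = 0 → firstVariation a b m η = 0) :
    ∃ c : 𝕜, ∀ s ∈ Ioo a b, m s - m (s + 1) = c * (f s - f (s + 1)) := by
  obtain ⟨c, hc⟩ := exists_smul_eq_of_ker_le_ker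
    (L := (firstVariation a b f).domRestrict (endpointVanishing a b))
    (K := (firstVariation a b m).domRestrict (endpointVanishing a b))
    fun η hη ↦ h η η.2 hη
  refine ⟨c, fun s hs ↦ ?_⟩
  have := LinearMap.congr_fun hc ⟨Pi.single s 1, single_mem_endpointVanishing hs⟩
  simpa [firstVariation_single hs] using this.symm

theorem eq_of_forall_Ioo_eq_succ {α : Type*} {a b : ℤ} {g : ℤ → α}
    (hg : ∀ s ∈ Ioo a b, g s = g (s + 1)) : ∀ t ∈ Icc (a + 1) b, g t = g (a + 1) := by
  intro t ht
  rw [mem_Icc] at ht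
  induction t, ht.1 using Int.leInduction with
  | base => rfl
  | succ n hn ih =>
    rw [← hg n (mem_Ioo.2 ⟨by omega, by omega⟩)]
    exact ih ⟨hn, by omega⟩

theorem discrete_isoperimetric_abnormal_general (a b : ℤ) (m f : ℤ → ℝ)
    (h : ∀ η : ℤ → ℝ, η a = 0 → η b = 0 →
      (∑ t ∈ Finset.Icc (a + 1) b, f t * (η t - η (t - 1))) = 0 →
      (∑ t ∈ Finset.Icc (a + 1) b, m t * (η t - η (t - 1))) = 0) :
    ∃ lam₀ lam : ℝ, (lam₀ ≠ 0 ∨ lam ≠ 0) ∧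
      ∃ c : ℝ, ∀ t ∈ Finset.Icc (a + 1) b, lam₀ * m t - lam * f t = c := by
  have hker : ∀ η ∈ endpointVanishing a b,
      firstVariation a b f η = 0 → firstVariation a b m η = 0 := fun η hη ↦
    h η (mem_endpointVanishing.1 hη).1 (mem_endpointVanishing.1 hη).2
  obtain ⟨lam, hlam⟩ := exists_sub_succ_eq_mul_of_firstVariation hker
  have hconst : ∀ s ∈ Ioo a b, m s - lam * f s = m (s + 1) - lam * f (s + 1) := fun s hs ↦ by
    linear_combination hlam s hs
  refine ⟨1, lam, Or.inl one_ne_zero, m (a + 1) - lam * f (a + 1), fun t ht ↦ ?_⟩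
  rw [one_mul]
  exact eq_of_forall_Ioo_eq_succ (g := fun t ↦ m t - lam * f t) hconst t ht

/-- Discrete isoperimetric multiplier rule, abnormal case included. -/
theorem discrete_isoperimetric_abnormal (a b : ℤ) (hab : a + 1 < b) (m f : ℤ → ℝ)
    (h : ∀ η : ℤ → ℝ, η a = 0 → η b = 0 →
      (∑ t ∈ Finset.Icc (a + 1) b, f t * (η t - η (t - 1))) = 0 →
      (∑ t ∈ Finset.Icc (a + 1) b, m t * (η t - η (t - 1))) = 0) :
    ∃ lam₀ lam : ℝ, (lam₀ ≠ 0 ∨ lam ≠ 0) ∧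
      ∃ c : ℝ, ∀ t ∈ Finset.Icc (a + 1) b, lam₀ * m t - lam * f t = c :=
  discrete_isoperimetric_abnormal_general a b m f h
end
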